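/- Let s, n be positive integers, V = 𝔽₂^{s×n}, and let P ⊆ V be an 𝔽₂-linear subspace. Then the base-4 WAFOM variant W(P) := Σ_{A ∈ P^⊥ \ {0}} 4^{−μ'(A)} satisfies W(P) = (1/|P|) · Σ_{x = (x_{i,j}) ∈ P} [ Π_{1≤i≤s} Π_{1≤j≤n} (1 + (−1)^{x_{i,j}} · 4^{−(j+1)}) − 1 ]. -/

import Mathlib

open Finset

/-! Expanding the product gives
`∏_{i,j} (1 + (-1)^{x i j} w i j) = ∑_A (-1)^{⟨x, A⟩} ∏_{i,j} (w i j)^{A i j}`.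
Summed over `x ∈ P`, the character `x ↦ (-1)^{⟨x, A⟩}` of `P` contributes `|P|` when
`A ∈ P^⊥` and `0` otherwise, so the average over `P` of the product is
`∑_{A ∈ P^⊥} ∏ (w i j)^{A i j}`, in which `A = 0` contributes `1`.
The theorem is the case `w i j = 4^{-(j+2)}`. -/

noncomputable def signChar : AddChar (ZMod 2) ℝ :=
  AddChar.zmodChar 2 (neg_one_sq : (-1 : ℝ) ^ 2 = 1)

lemma signChar_apply (t : ZMod 2) : signChar t = (-1) ^ t.val := rfl

lemma ZMod.univ_two : (univ : Finset (ZMod 2)) = {0, 1} := rfl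

lemma signChar_eq_one_iff {t : ZMod 2} : signChar t = 1 ↔ t = 0 := by
  obtain rfl | rfl : t = 0 ∨ t = 1 := by revert t; decide
  all_goals norm_num [signChar_apply, ZMod.val_one]

lemma AddChar.map_sum_eq_prod {A M ι : Type*} [AddCommMonoid A] [CommMonoid M]
    (ψ : AddChar A M) (s : Finset ι) (f : ι → A) :
    ψ (∑ i ∈ s, f i) = ∏ i ∈ s, ψ (f i) := by
  induction s using Finset.cons_induction with
  | empty => simp
  | cons a s h ih => rw [sum_cons, prod_cons, AddChar.map_add_eq_mul, ih]

open scoped Classical in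
lemma sum_signChar_eq_ite {G : Type*} [AddGroup G] [Fintype G] (f : G →+ ZMod 2) :
    ∑ g, signChar (f g) = if f = 0 then (Fintype.card G : ℝ) else 0 := by
  have h : signChar.compAddMonoidHom f = 0 ↔ f = 0 := by
    simp [signChar_eq_one_iff, DFunLike.ext_iff]
  simpa [h] using (signChar.compAddMonoidHom f).sum_eq_ite

lemma one_add_signChar_mul (t : ZMod 2) (w : ℝ) :
    1 + signChar t * w = ∑ a : ZMod 2, signChar (t * a) * w ^ a.val := by
  simp [ZMod.univ_two, ZMod.val_one]

lemma prod_one_add_signChar_mul {ι : Type*} [Fintype ι] [DecidableEq ι] (x : ι → ZMod 2)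
    (w : ι → ℝ) :
    ∏ k, (1 + signChar (x k) * w k) =
      ∑ a : ι → ZMod 2, signChar (∑ k, x k * a k) * ∏ k, w k ^ (a k).val := by
  simp_rw [one_add_signChar_mul, Fintype.prod_sum, prod_mul_distrib, AddChar.map_sum_eq_prod]

section Matrix

variable {ι κ : Type*} [Fintype ι] [DecidableEq ι] [Fintype κ] [DecidableEq κ]

lemma prod_prod_one_add_signChar_mul (x : Matrix ι κ (ZMod 2)) (w : ι → κ → ℝ) :
    ∏ i, ∏ j, (1 + signChar (x i j) * w i j) =
      ∑ A : Matrix ι κ (ZMod 2),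
        signChar (∑ i, ∑ j, x i j * A i j) * ∏ i, ∏ j, w i j ^ (A i j).val := by
  simp_rw [prod_one_add_signChar_mul, Fintype.prod_sum, prod_mul_distrib,
    AddChar.map_sum_eq_prod]
  rfl

@[simps]
def Matrix.pairWith {R : Type*} [NonUnitalNonAssocSemiring R] (A : Matrix ι κ R) :
    Matrix ι κ R →+ R where
  toFun B := ∑ i, ∑ j, B i j * A i j
  map_zero' := by simp
  map_add' B C := by simp [add_mul, sum_add_distrib]

open scoped Classical in
noncomputable def Matrix.perp (P : Submodule (ZMod 2) (Matrix ι κ (ZMod 2))) :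
    Finset (Matrix ι κ (ZMod 2)) :=
  univ.filter fun A => ∀ B ∈ P, ∑ i, ∑ j, B i j * A i j = 0

open scoped Classical in
lemma sum_signChar_pairing_eq_ite (P : Submodule (ZMod 2) (Matrix ι κ (ZMod 2)))
    (A : Matrix ι κ (ZMod 2)) :
    ∑ x : P, signChar (∑ i, ∑ j, (x : Matrix ι κ (ZMod 2)) i j * A i j) =
      if A ∈ Matrix.perp P then (Nat.card P : ℝ) else 0 := by
  set f := (Matrix.pairWith A).comp P.toAddSubgroup.subtype
  have hf : f = 0 ↔ A ∈ Matrix.perp P := by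
    simp [f, DFunLike.ext_iff, Matrix.perp]
  rw [Nat.card_eq_fintype_card, ← if_congr hf rfl rfl]
  exact sum_signChar_eq_ite f

open scoped Classical in
theorem sum_prod_prod_one_add_signChar_mul_eq_card_mul
    (P : Submodule (ZMod 2) (Matrix ι κ (ZMod 2))) (w : ι → κ → ℝ) :
    ∑ x : P, ∏ i, ∏ j, (1 + signChar ((x : Matrix ι κ (ZMod 2)) i j) * w i j) =
      Nat.card P * ∑ A ∈ Matrix.perp P, ∏ i, ∏ j, w i j ^ (A i j).val := by
  simp_rw [prod_prod_one_add_signChar_mul]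
  rw [sum_comm, mul_sum, ← univ_inter (Matrix.perp P), ← sum_ite_mem]
  refine sum_congr rfl fun A _ => ?_
  rw [← sum_mul, sum_signChar_pairing_eq_ite]
  split_ifs <;> simp

open scoped Classical in
theorem sum_perp_erase_zero_prod_prod_pow_eq (P : Submodule (ZMod 2) (Matrix ι κ (ZMod 2)))
    (w : ι → κ → ℝ) :
    ∑ A ∈ (Matrix.perp P).erase 0, ∏ i, ∏ j, w i j ^ (A i j).val =
      (1 / Nat.card P) *
        ∑ x : P,
          ((∏ i, ∏ j, (1 + signChar ((x : Matrix ι κ (ZMod 2)) i j) * w i j)) - 1) := by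
  have hP : (Nat.card P : ℝ) ≠ 0 := Nat.cast_ne_zero.2 Nat.card_pos.ne'
  have hzero_mem : (0 : Matrix ι κ (ZMod 2)) ∈ Matrix.perp P := by simp [Matrix.perp]
  have hzero : ∏ i, ∏ j, w i j ^ ((0 : Matrix ι κ (ZMod 2)) i j).val = 1 := by simp
  rw [sum_sub_distrib, sum_prod_prod_one_add_signChar_mul_eq_card_mul, sum_const, card_univ,
    ← Nat.card_eq_fintype_card, ← add_sum_erase _ _ hzero_mem, hzero]
  field_simp
  ring

end Matrix

open scoped Classical in
theorem wafom4_formula_general (s n : ℕ)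
    (P : Submodule (ZMod 2) (Matrix (Fin s) (Fin n) (ZMod 2))) :
    ∑ A ∈ Finset.univ.filter
        (fun A : Matrix (Fin s) (Fin n) (ZMod 2) =>
          (∀ B ∈ P, ∑ i : Fin s, ∑ j : Fin n, B i j * A i j = (0 : ZMod 2)) ∧ A ≠ 0),
        (4 : ℝ) ^ (-(∑ i : Fin s, ∑ j : Fin n, ((j : ℕ) + 1 + 1) * (A i j).val : ℕ) : ℤ) =
      (1 / (Nat.card P : ℝ)) *
        ∑ x : P,
          ((∏ i : Fin s, ∏ j : Fin n,
            (1 + (-1 : ℝ) ^ ((x : Matrix (Fin s) (Fin n) (ZMod 2)) i j).val *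
              (4 : ℝ) ^ (-(((j : ℕ) + 1) + 1 : ℤ)))) - 1) := by
  have hweight (A : Matrix (Fin s) (Fin n) (ZMod 2)) :
      (4 : ℝ) ^ (-(∑ i : Fin s, ∑ j : Fin n, ((j : ℕ) + 1 + 1) * (A i j).val : ℕ) : ℤ) =
        ∏ i, ∏ j : Fin n, ((4 : ℝ) ^ (-(((j : ℕ) + 1) + 1 : ℤ))) ^ (A i j).val := by
    have h4 (j : Fin n) :
        (4 : ℝ) ^ (-(((j : ℕ) + 1) + 1 : ℤ)) = 4⁻¹ ^ ((j : ℕ) + 1 + 1) := by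
      rw [inv_pow, ← zpow_natCast, ← zpow_neg]; push_cast; rfl
    rw [zpow_neg, zpow_natCast, ← inv_pow]
    simp only [h4, ← pow_mul, prod_pow_eq_pow_sum]
  have hsupport : univ.filter (fun A : Matrix (Fin s) (Fin n) (ZMod 2) =>
      (∀ B ∈ P, ∑ i, ∑ j, B i j * A i j = 0) ∧ A ≠ 0) = (Matrix.perp P).erase 0 := by
    ext A
    simp [Matrix.perp, and_comm]
  simp_rw [hsupport, hweight, sum_perp_erase_zero_prod_prod_pow_eq, signChar_apply]

open scoped Classical in
/-- Base-4 WAFOM variant computational formula: for an `𝔽₂`-linear subspace `P ⊆ V = 𝔽₂^{s×n}`,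
`Σ_{A ∈ P^⊥ \ {0}} 4^{−μ'(A)} = (1/|P|) Σ_{x ∈ P} [Π_{i,j} (1 + (−1)^{x_{i,j}} 4^{−(j+1)}) − 1]`,
where `μ'(A) = Σ_{i,j} (j+1)·a_{i,j}` and the paper's index `j` runs through `1, …, n`
(so a column index `j : Fin n` corresponds to the paper's `j.val + 1`). -/
theorem wafom4_formula (s n : ℕ) (hs : 0 < s) (hn : 0 < n)
    (P : Submodule (ZMod 2) (Matrix (Fin s) (Fin n) (ZMod 2))) :
    ∑ A ∈ Finset.univ.filter
        (fun A : Matrix (Fin s) (Fin n) (ZMod 2) =>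
          (∀ B ∈ P, ∑ i : Fin s, ∑ j : Fin n, B i j * A i j = (0 : ZMod 2)) ∧ A ≠ 0),
        (4 : ℝ) ^ (-(∑ i : Fin s, ∑ j : Fin n, ((j : ℕ) + 1 + 1) * (A i j).val : ℕ) : ℤ) =
      (1 / (Nat.card P : ℝ)) *
        ∑ x : P,
          ((∏ i : Fin s, ∏ j : Fin n,
            (1 + (-1 : ℝ) ^ ((x : Matrix (Fin s) (Fin n) (ZMod 2)) i j).val *
              (4 : ℝ) ^ (-(((j : ℕ) + 1) + 1 : ℤ)))) - 1) :=
  wafom4_formula_general s n P
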